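/- arXiv:2511.15460 — 7 statements merged into one kernel-verified Lean document; each statement's English description precedes it below -/
import Mathlib

section
/- Let M be a matroid on a finite ground set E with an injective weight function w : E → ℝ, let e ∈ E, and let B be a minimum-weight base of the restriction M|(E\{e}). Suppose e lies in the closure of B in M, let C be the unique circuit of M contained in B ∪ {e}, and let f be the element of C of maximum weight. Then: if f ≠ e (equivalently w(f) > w(e)), the set (B \ {f}) ∪ {e} is a minimum-weight base of M; and if f = e, the set B is a minimum-weight base of M. -/
open Set Matroid

variable {α : Type*}

/-- The rank of a set `A` in a matroid `M`: the size of a largest independent subset of `A`. -/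
noncomputable def mrk (M : Matroid α) (A : Set α) : ℕ :=
  sSup {n : ℕ | ∃ I, M.Indep I ∧ I ⊆ A ∧ I.ncard = n}

/-- The total weight of a set of elements. -/
noncomputable def wSum (w : α → ℝ) (S : Set α) : ℝ := ∑ᶠ e ∈ S, w e

/-- `B` is a minimum-weight base of `M` with respect to the weights `w`. -/
def IsMinWeightBase (M : Matroid α) (w : α → ℝ) (B : Set α) : Prop :=
  M.IsBase B ∧ ∀ B', M.IsBase B' → wSum w B ≤ wSum w B'

/-- A circuit: an inclusion-wise minimal dependent set. -/
def IsCircuit (M : Matroid α) (C : Set α) : Prop :=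
  C ⊆ M.E ∧ ¬ M.Indep C ∧ ∀ x ∈ C, M.Indep (C \ {x})

/-- The fractional base packing number `Φ_M`. -/
noncomputable def PhiM (M : Matroid α) : ℝ :=
  sInf {x : ℝ | ∃ A ⊆ M.E, mrk M (M.E \ A) < mrk M M.E ∧
    x = (A.ncard : ℝ) / ((mrk M M.E : ℝ) - (mrk M (M.E \ A) : ℝ))}

/-- `A` attains the fractional packing number of `M`. -/
def AttainsPhi (M : Matroid α) (A : Set α) : Prop :=
  A ⊆ M.E ∧ mrk M (M.E \ A) < mrk M M.E ∧
    (A.ncard : ℝ) / ((mrk M M.E : ℝ) - (mrk M (M.E \ A) : ℝ)) = PhiM M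

/-- The fractional base covering number `β_M`. -/
noncomputable def BetaM (M : Matroid α) : ℝ :=
  sSup {x : ℝ | ∃ A ⊆ M.E, A.Nonempty ∧ x = (A.ncard : ℝ) / (mrk M A : ℝ)}

/-- The relative load of an element `e` in a base collection `Bs` of size `k`. -/
noncomputable def relLoad {k : ℕ} (Bs : Fin k → Set α) (e : α) : ℝ :=
  (({i | e ∈ Bs i} : Set (Fin k)).ncard : ℝ) / (k : ℝ)

/-! Let `B₀` be the swapped set (`insert e (B \ {f})` or `B`); it is a base since `C` is the
fundamental circuit of `e` with respect to `B`, and `B` spans `e`. The point is that every base `B'`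
of `M` can be traded for a base of `M ＼ {e}` at the price of one element `g` of the circuit `C`:
either `e ∉ B'` and `B'` itself is such a base (take `g = e`), or `e ∈ B'` and some `g ∈ C \ {e}`
replaces `e` in `B'`, because `e` is spanned by `C \ {e}`. Minimality of `B` then gives
`w(B) + w(e) ≤ w(B') + w(g)`, and `w(g) ≤ w(f)` turns this into `w(B₀) ≤ w(B')`. -/

lemma _root_.IsCircuit.matroidIsCircuit {M : Matroid α} {C : Set α} (hC : _root_.IsCircuit M C) :
    M.IsCircuit C :=
  isCircuit_iff_dep_forall_sdiff_singleton_indep.2 ⟨⟨hC.2.1, hC.1⟩, hC.2.2⟩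

lemma wSum_insert_sdiff (w : α → ℝ) {S : Set α} {a b : α} (hS : S.Finite) (hb : b ∈ S)
    (ha : a ∉ S) : wSum w (insert a (S \ {b})) = wSum w S + w a - w b := by
  have hsplit : wSum w S = w b + wSum w (S \ {b}) := by
    conv_lhs => rw [← insert_eq_of_mem hb, ← insert_sdiff_singleton]
    exact finsum_mem_insert w (fun h ↦ h.2 rfl) hS.sdiff
  rw [wSum, finsum_mem_insert w (fun h ↦ ha h.1) hS.sdiff, ← wSum, hsplit]
  ring

namespace Matroid

variable {M : Matroid α} {B C : Set α} {e f : α}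

lemma IsCircuit.mem_of_subset_insert (hC : M.IsCircuit C) (hB : M.Indep B)
    (hCB : C ⊆ insert e B) : e ∈ C :=
  ((subset_insert_iff.1 hCB).resolve_left fun h ↦ hC.not_indep (hB.subset h)).1

lemma IsBase.of_deleteElem_of_mem_closure (hB : (M ＼ {e}).IsBase B) (he : e ∈ M.closure B) :
    M.IsBase B := by
  rw [delete_isBase_iff] at hB
  refine hB.indep.isBase_of_ground_subset_closure fun x hx ↦ ?_
  obtain rfl | hxe := eq_or_ne x e
  · exact he
  · exact hB.subset_closure ⟨hx, hxe⟩

lemma IsBase.exists_isBase_insert_sdiff_of_isCircuit (hB : M.IsBase B) (hC : M.IsCircuit C)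
    (heB : e ∈ B) (heC : e ∈ C) : ∃ g ∈ C \ {e}, g ∉ B ∧ M.IsBase (insert g (B \ {e})) := by
  have hnot : ¬ C \ {e} ⊆ M.closure (B \ {e}) := fun hsub ↦
    hB.indep.notMem_closure_sdiff_of_mem heB
      (closure_subset_closure_of_subset_closure hsub (hC.mem_closure_sdiff_singleton_of_mem heC))
  obtain ⟨g, hgC, hgcl⟩ := not_subset.1 hnot
  refine ⟨g, hgC, fun hgB ↦ hgcl (M.subset_closure _ ?_ ⟨hgB, hgC.2⟩),
    hB.exchange_base_of_notMem_closure heB hgcl (hC.subset_ground hgC.1)⟩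
  exact sdiff_subset.trans hB.subset_ground

lemma IsBase.isBase_insert_sdiff_of_isCircuit (hB : M.IsBase B) (hC : M.IsCircuit C)
    (hCB : C ⊆ insert e B) (heB : e ∉ B) (hfC : f ∈ C) (hfe : f ≠ e) :
    M.IsBase (insert e (B \ {f})) := by
  have hecl : e ∈ M.closure B :=
    hB.closure_eq ▸ hC.subset_ground (hC.mem_of_subset_insert hB.indep hCB)
  rw [hC.eq_fundCircuit_of_subset hB.indep hCB, hB.indep.mem_fundCircuit_iff hecl heB] at hfC
  rw [← insert_sdiff_singleton_comm hfe.symm] at hfC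
  exact hB.exchange_isBase_of_indep heB hfC

end Matroid

theorem IsMinWeightBase.exists_mem_wSum_add_le {M : Matroid α} {B B' C : Set α} {e : α}
    {w : α → ℝ} (hfin : M.E.Finite)
    (hB : IsMinWeightBase (M ＼ {e}) w B) (he : M.Coindep {e}) (hC : M.IsCircuit C) (heC : e ∈ C)
    (hB' : M.IsBase B') : ∃ g ∈ C, wSum w B + w e ≤ wSum w B' + w g := by
  by_cases heB' : e ∈ B'
  · obtain ⟨g, hgC, hgB', hbase⟩ := hB'.exists_isBase_insert_sdiff_of_isCircuit hC heB' heC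
    have hdel : (M ＼ {e}).IsBase (insert g (B' \ {e})) :=
      he.delete_isBase_iff.2 ⟨hbase, disjoint_singleton_right.2 (by simpa [eq_comm] using hgC.2)⟩
    have hle := hB.2 _ hdel
    rw [wSum_insert_sdiff w (hfin.subset hB'.subset_ground) heB' hgB'] at hle
    exact ⟨g, hgC.1, by linarith⟩
  · have hdel : (M ＼ {e}).IsBase B' :=
      he.delete_isBase_iff.2 ⟨hB', disjoint_singleton_right.2 heB'⟩
    exact ⟨e, heC, by linarith [hB.2 B' hdel]⟩

theorem stmt_0_general (M : Matroid α) (hfin : M.E.Finite) (w : α → ℝ)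
    (e : α) (he : e ∈ M.E)
    (B : Set α) (hB : IsMinWeightBase (M ↾ (M.E \ {e})) w B)
    (hecl : e ∈ M.closure B)
    (C : Set α) (hC : _root_.IsCircuit M C) (hCsub : C ⊆ insert e B)
    (f : α) (hfC : f ∈ C) (hfmax : ∀ g ∈ C, w g ≤ w f) :
    (f ≠ e → IsMinWeightBase M w (insert e (B \ {f}))) ∧
    (f = e → IsMinWeightBase M w B) := by
  have hBM : M.IsBase B := hB.1.of_deleteElem_of_mem_closure hecl
  have hcoind : M.Coindep {e} :=
    coindep_iff_exists'.2 ⟨⟨B, hBM, hB.1.subset_ground⟩, singleton_subset_iff.2 he⟩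
  have hC := hC.matroidIsCircuit
  have heB : e ∉ B := fun h ↦ (hB.1.subset_ground h).2 rfl
  have heC : e ∈ C := hC.mem_of_subset_insert hBM.indep hCsub
  have hkey : ∀ B', M.IsBase B' → ∃ g ∈ C, wSum w B + w e ≤ wSum w B' + w g :=
    fun _ ↦ hB.exists_mem_wSum_add_le hfin hcoind hC heC
  refine ⟨fun hfe ↦ ⟨hBM.isBase_insert_sdiff_of_isCircuit hC hCsub heB hfC hfe, fun B' hB' ↦ ?_⟩,
    fun hfe ↦ ⟨hBM, fun B' hB' ↦ ?_⟩⟩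
  · obtain ⟨g, hgC, hle⟩ := hkey B' hB'
    have hfB : f ∈ B := (hCsub hfC).resolve_left hfe
    rw [wSum_insert_sdiff w (hfin.subset hBM.subset_ground) hfB heB]
    linarith [hfmax g hgC]
  · obtain ⟨g, hgC, hle⟩ := hkey B' hB'
    linarith [hfe ▸ hfmax g hgC]

/-- Insertion step for a dynamic minimum-weight base: if `e` is spanned by the old
minimum-weight base `B` of `M` restricted to `E \ {e}`, and `f` is the maximum-weight
element of the unique circuit of `M` inside `B ∪ {e}`, then swapping `f` for `e`
(if `f ≠ e`) yields a minimum-weight base of `M`, and otherwise `B` itself is one. -/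
theorem stmt_0 (M : Matroid α) (hfin : M.E.Finite) (w : α → ℝ) (hw : Set.InjOn w M.E)
    (e : α) (he : e ∈ M.E)
    (B : Set α) (hB : IsMinWeightBase (M ↾ (M.E \ {e})) w B)
    (hecl : e ∈ M.closure B)
    (C : Set α) (hC : _root_.IsCircuit M C) (hCsub : C ⊆ insert e B)
    (f : α) (hfC : f ∈ C) (hfmax : ∀ g ∈ C, w g ≤ w f) :
    (f ≠ e → IsMinWeightBase M w (insert e (B \ {f}))) ∧
    (f = e → IsMinWeightBase M w B) :=
  stmt_0_general M hfin w e he B hB hecl C hC hCsub f hfC hfmax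
end

section
/- Let M be a matroid on a finite ground set E with an injective weight function w : E → ℝ, let B be a minimum-weight base of M, and let e ∈ B. If every element of E\{e} lies in the closure of B\{e} in M, then B\{e} is a minimum-weight base of the restriction M|(E\{e}). Otherwise, letting f be the element of minimum weight among the elements of E\{e} not lying in the closure of B\{e} in M, the set (B\{e}) ∪ {f} is a minimum-weight base of M|(E\{e}). -/
open Set Matroid

variable {α : Type*}

/-! Let `F := M.closure (B \ {e})`, which does not contain `e`. If `F ⊇ M.E \ {e}`, every base
`B'` of `M ↾ (M.E \ {e})` spans `F`, so `insert e B'` is a base of `M` and minimality of `B`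
gives `w(B \ {e}) ≤ w(B')`. Otherwise every such `B'` is a base of `M`, and `e` can be exchanged
into it for some `g ∈ B' \ F`, because the fundamental circuit of `e` in `B'` cannot lie in
`insert e F`. Minimality of `B` gives `w(B \ {e}) ≤ w(B') - w(g)`, and `w(f) ≤ w(g)` by the
choice of `f`. -/

lemma wSum_insert (w : α → ℝ) {S : Set α} (hS : S.Finite) {x : α} (hx : x ∉ S) :
    wSum w (insert x S) = w x + wSum w S :=
  finsum_mem_insert w hx hS

lemma wSum_eq_add_wSum_sdiff_singleton (w : α → ℝ) {S : Set α} (hS : S.Finite) {x : α}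
    (hx : x ∈ S) : wSum w S = w x + wSum w (S \ {x}) := by
  rw [← wSum_insert w hS.sdiff (x := x) (S := S \ {x}) (by simp), insert_sdiff_singleton,
    insert_eq_of_mem hx]

namespace Matroid

variable {M : Matroid α} {B F : Set α} {e : α}

lemma IsBase.exists_exchange_notMem_of_notMem_closure (hB : M.IsBase B) (heE : e ∈ M.E)
    (heB : e ∉ B) (heF : e ∉ M.closure F) :
    ∃ g ∈ B \ F, M.IsBase (insert e (B \ {g})) := by
  have hC := hB.fundCircuit_isCircuit heE heB
  obtain ⟨g, hgC, hgF⟩ : ∃ g ∈ M.fundCircuit e B \ {e}, g ∉ F := by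
    by_contra! h
    exact heF (M.closure_subset_closure h
      (hC.mem_closure_sdiff_singleton_of_mem (M.mem_fundCircuit e B)))
  have hge : g ≠ e := hgC.2
  have hgB : g ∈ B := (M.fundCircuit_subset_insert e B hgC.1).resolve_left hge
  refine ⟨g, ⟨hgB, hgF⟩, hB.exchange_isBase_of_indep heB ?_⟩
  rw [insert_sdiff_singleton_comm hge.symm]
  exact (hB.indep.mem_fundCircuit_iff (by rwa [hB.closure_eq]) heB).1 hgC.1

end Matroid

section DeleteFromMinWeightBase

variable {M : Matroid α} {w : α → ℝ} {B : Set α} {e f : α}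

lemma isMinWeightBase_restrict_sdiff_of_subset_closure (hfin : M.E.Finite)
    (hB : IsMinWeightBase M w B) (heB : e ∈ B) (hsp : M.E \ {e} ⊆ M.closure (B \ {e})) :
    IsMinWeightBase (M ↾ (M.E \ {e})) w (B \ {e}) := by
  obtain ⟨hBb, hBmin⟩ := hB
  have heE : e ∈ M.E := hBb.subset_ground heB
  have hI : M.IsBasis (B \ {e}) (M.E \ {e}) :=
    (hBb.indep.subset sdiff_subset).isBasis_of_subset_of_subset_closure
      (sdiff_subset_sdiff_left hBb.subset_ground) hsp
  refine ⟨hI.restrict_isBase, fun B' hB' => ?_⟩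
  have hB'X : M.IsBasis B' (M.E \ {e}) := (isBase_restrict_iff sdiff_subset).1 hB'
  have hecl : e ∉ M.closure B' := by
    rw [hB'X.closure_eq_closure, ← hI.closure_eq_closure]
    exact hBb.indep.notMem_closure_sdiff_of_mem heB
  have heB' : M.IsBase (insert e B') := by
    have := hB'X.insert_isBasis_insert_of_notMem_closure hecl heE
    rwa [insert_sdiff_singleton, insert_eq_of_mem heE, isBasis_ground_iff] at this
  have hB'fin : B'.Finite := hfin.subset (hB'X.subset.trans sdiff_subset)
  have hw := hBmin _ heB'
  rw [wSum_insert w hB'fin fun h => (hB'X.subset h).2 rfl,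
    wSum_eq_add_wSum_sdiff_singleton w (hfin.subset hBb.subset_ground) heB] at hw
  linarith

lemma isMinWeightBase_restrict_insert_of_forall_le (hfin : M.E.Finite)
    (hB : IsMinWeightBase M w B) (heB : e ∈ B) (hf : f ∈ M.E \ {e})
    (hfcl : f ∉ M.closure (B \ {e}))
    (hfmin : ∀ g, g ∈ M.E \ {e} → g ∉ M.closure (B \ {e}) → w f ≤ w g) :
    IsMinWeightBase (M ↾ (M.E \ {e})) w (insert f (B \ {e})) := by
  obtain ⟨hBb, hBmin⟩ := hB
  have hBfin : B.Finite := hfin.subset hBb.subset_ground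
  have hJ : M.IsBase (insert f (B \ {e})) := hBb.exchange_base_of_notMem_closure heB hfcl hf.1
  have hJX : insert f (B \ {e}) ⊆ M.E \ {e} :=
    insert_subset hf (sdiff_subset_sdiff_left hBb.subset_ground)
  refine ⟨(hJ.isBasis_of_subset sdiff_subset hJX).restrict_isBase, fun B' hB' => ?_⟩
  have hB'X : M.IsBasis B' (M.E \ {e}) := (isBase_restrict_iff sdiff_subset).1 hB'
  have hB'fin : B'.Finite := hfin.subset (hB'X.subset.trans sdiff_subset)
  have heB' : e ∉ B' := fun h => (hB'X.subset h).2 rfl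
  obtain ⟨g, ⟨hgB', hgcl⟩, hexch⟩ :=
    (hB'X.isBase_of_isBase_subset hJ hJX).exists_exchange_notMem_of_notMem_closure
      (hBb.subset_ground heB) heB'
      (by rw [closure_closure]; exact hBb.indep.notMem_closure_sdiff_of_mem heB)
  have hfg := hfmin g (hB'X.subset hgB') hgcl
  have hw := hBmin _ hexch
  have hfB : f ∉ B \ {e} :=
    fun h => hfcl (M.subset_closure _ (sdiff_subset.trans hBb.subset_ground) h)
  rw [wSum_insert w hB'fin.sdiff fun h => heB' h.1,
    wSum_eq_add_wSum_sdiff_singleton w hBfin heB] at hw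
  rw [wSum_insert w hBfin.sdiff hfB, wSum_eq_add_wSum_sdiff_singleton w hB'fin hgB']
  linarith

end DeleteFromMinWeightBase

theorem stmt_1_general (M : Matroid α) (hfin : M.E.Finite) (w : α → ℝ)
    (B : Set α) (hB : IsMinWeightBase M w B) (e : α) (heB : e ∈ B) :
    ((M.E \ {e} ⊆ M.closure (B \ {e})) →
      IsMinWeightBase (M ↾ (M.E \ {e})) w (B \ {e})) ∧
    (∀ f, f ∈ M.E \ {e} → f ∉ M.closure (B \ {e}) →
      (∀ g, g ∈ M.E \ {e} → g ∉ M.closure (B \ {e}) → w f ≤ w g) →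
      IsMinWeightBase (M ↾ (M.E \ {e})) w (insert f (B \ {e}))) :=
  ⟨isMinWeightBase_restrict_sdiff_of_subset_closure hfin hB heB,
    fun _ => isMinWeightBase_restrict_insert_of_forall_le hfin hB heB⟩

/-- Deletion step for a dynamic minimum-weight base: deleting `e ∈ B` from the ground set,
either `B \ {e}` spans everything and remains a minimum-weight base of the restriction,
or the minimum-weight element `f` not spanned by `B \ {e}` is added to obtain a
minimum-weight base of the restriction. -/
theorem stmt_1 (M : Matroid α) (hfin : M.E.Finite) (w : α → ℝ) (hw : Set.InjOn w M.E)
    (B : Set α) (hB : IsMinWeightBase M w B) (e : α) (heB : e ∈ B) :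
    ((M.E \ {e} ⊆ M.closure (B \ {e})) →
      IsMinWeightBase (M ↾ (M.E \ {e})) w (B \ {e})) ∧
    (∀ f, f ∈ M.E \ {e} → f ∉ M.closure (B \ {e}) →
      (∀ g, g ∈ M.E \ {e} → g ∉ M.closure (B \ {e}) → w f ≤ w g) →
      IsMinWeightBase (M ↾ (M.E \ {e})) w (insert f (B \ {e}))) :=
  stmt_1_general M hfin w B hB e heB
end

section
/- Let M be a matroid on a finite ground set E with rk(E) ≥ 1. Then the maximum over all base collections B of M of the quantity 1 / (max_{e∈E} ℓ^B(e)) exists and equals Φ_M; that is, there is a base collection B with 1 / (max_{e∈E} ℓ^B(e)) = Φ_M, and every base collection B satisfies 1 / (max_{e∈E} ℓ^B(e)) ≤ Φ_M. -/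
open Set Matroid

variable {α : Type*}

/-!
Averaging the load over a set `A` that attains `Φ_M` shows that every base collection has an
element of relative load at least `(rk E - rk (E \ A)) / |A| = 1 / Φ_M`. Conversely, minimality of
`A` says exactly that `k = |A|` and `t = rk E - rk (E \ A)` satisfy Edmonds' packing condition
`k rk E ≤ k rk X + t |E \ X|` for all `X`, so there are `k` bases covering every element at
most `t` times. That packing theorem is proved with augmenting paths. Take a family of
independent sets with loads at most `t` and maximal total size. Exchanging simultaneously along a
shortest walk in the exchange graph, from an element of load `< t` to an element that can be added
to some member, would enlarge the family; so no such walk exists, the set `R` reachable from the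
underloaded elements is spanned by every member, the total size is `k rk R + t |E \ R| ≥ k rk E`,
and every member is a base.
-/

namespace Matroid

variable {M : Matroid α} {I J X : Set α}

lemma IsBasis'.mrk_eq_ncard [M.RankFinite] (hI : M.IsBasis' I X) : mrk M X = I.ncard := by
  have hle : ∀ n ∈ {n : ℕ | ∃ J, M.Indep J ∧ J ⊆ X ∧ J.ncard = n}, n ≤ I.ncard := by
    rintro _ ⟨J, hJ, hJX, rfl⟩
    obtain ⟨K, hK, hJK⟩ := hJ.subset_isBasis'_of_subset hJX
    rw [ncard_def I, hI.encard_eq_encard hK, ← ncard_def]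
    exact ncard_le_ncard hJK hK.indep.finite
  exact le_antisymm (csSup_le ⟨_, I, hI.indep, hI.subset, rfl⟩ hle)
    (le_csSup ⟨_, hle⟩ ⟨I, hI.indep, hI.subset, rfl⟩)

lemma Indep.ncard_le_mrk [M.RankFinite] (hJ : M.Indep J) (hJX : J ⊆ X) : J.ncard ≤ mrk M X := by
  obtain ⟨K, hK, hJK⟩ := hJ.subset_isBasis'_of_subset hJX
  rw [hK.mrk_eq_ncard]
  exact ncard_le_ncard hJK hK.indep.finite

lemma IsBase.ncard_eq_mrk [M.RankFinite] {B : Set α} (hB : M.IsBase B) : B.ncard = mrk M M.E :=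
  hB.isBasis_ground.isBasis'.mrk_eq_ncard.symm

lemma mrk_empty (M : Matroid α) [M.RankFinite] : mrk M ∅ = 0 := by
  obtain ⟨I, hI⟩ := M.exists_isBasis' ∅
  rw [hI.mrk_eq_ncard, subset_empty_iff.1 hI.subset, ncard_empty]

lemma Indep.isBase_of_mrk_le_ncard [M.RankFinite] (hI : M.Indep I) (h : mrk M M.E ≤ I.ncard) :
    M.IsBase I := by
  obtain ⟨B, hB, hIB⟩ := hI.exists_isBase_superset
  rwa [eq_of_subset_of_ncard_le hIB (hB.ncard_eq_mrk ▸ h) hB.indep.finite]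

lemma Indep.ncard_eq_of_closure_eq (hI : M.Indep I) (hJ : M.Indep J)
    (h : M.closure I = M.closure J) : I.ncard = J.ncard := by
  rw [ncard_def, ncard_def, hI.isBasis_closure.encard_eq_encard (h ▸ hJ.isBasis_closure)]

end Matroid

section Walk

variable {β : Type*}

def IsWalk (r : β → β → Prop) (S T : Set β) (m : ℕ) (y : ℕ → β) : Prop :=
  y 0 ∈ S ∧ y m ∈ T ∧ ∀ τ < m, r (y τ) (y (τ + 1))

def IsShortestWalk (r : β → β → Prop) (S T : Set β) (m : ℕ) (y : ℕ → β) : Prop :=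
  IsWalk r S T m y ∧ ∀ m' y', IsWalk r S T m' y' → m ≤ m'

variable {r : β → β → Prop} {S T : Set β} {m : ℕ} {y : ℕ → β}

lemma IsWalk.snoc {x : β} (hy : IsWalk r S T m y) (hx : r (y m) x) :
    IsWalk r S {x} (m + 1) (Function.update y (m + 1) x) := by
  refine ⟨by simpa using hy.1, by simp, fun τ hτ => ?_⟩
  rw [Function.update_of_ne (by omega)]
  obtain hτm | rfl := Nat.lt_succ_iff_lt_or_eq.1 hτ
  · rw [Function.update_of_ne (by omega)]
    exact hy.2.2 τ hτm
  · simpa using hx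

lemma exists_isShortestWalk (h : ∃ m y, IsWalk r S T m y) : ∃ m y, IsShortestWalk r S T m y := by
  classical
  obtain ⟨y, hy⟩ := Nat.find_spec h
  exact ⟨_, y, hy, fun m' y' hy' => Nat.find_min' h ⟨y', hy'⟩⟩

namespace IsShortestWalk

lemma not_rel (hy : IsShortestWalk r S T m y) {a b : ℕ} (hab : a + 1 < b) (hbm : b ≤ m) :
    ¬ r (y a) (y b) := by
  intro hr
  -- jumping from `y a` straight to `y b` gives a walk that is `b - a - 1` steps shorter
  have hshort : IsWalk r S T (m - (b - a - 1))
      (fun τ => if τ ≤ a then y τ else y (τ + (b - a - 1))) := by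
    refine ⟨by simpa using hy.1.1, ?_, fun τ hτ => ?_⟩
    · dsimp only
      rw [if_neg (by omega), show m - (b - a - 1) + (b - a - 1) = m by omega]
      exact hy.1.2.1
    · obtain hτa | rfl | hτa := lt_trichotomy τ a
      · simpa [hτa.le, Nat.succ_le_of_lt hτa] using hy.1.2.2 τ (by omega)
      · simpa [show τ + 1 + (b - τ - 1) = b by omega] using hr
      · simpa [show ¬ τ ≤ a by omega, show ¬ τ + 1 ≤ a by omega,
          show τ + 1 + (b - a - 1) = τ + (b - a - 1) + 1 by omega] using
          hy.1.2.2 (τ + (b - a - 1)) (by omega)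
  have := hy.2 _ _ hshort
  omega

lemma notMem_target (hy : IsShortestWalk r S T m y) {a : ℕ} (ham : a < m) : y a ∉ T :=
  fun haT => absurd (hy.2 a y ⟨hy.1.1, haT, fun τ hτ => hy.1.2.2 τ (by omega)⟩) (by omega)

lemma injOn (hy : IsShortestWalk r S T m y) : InjOn y (Iic m) := by
  suffices h : ∀ a b, a < b → b ≤ m → y a ≠ y b by
    intro a ha b hb hab
    by_contra hne
    obtain h' | h' := lt_or_gt_of_ne hne
    exacts [h a b h' hb hab, h b a h' ha hab.symm]
  intro a b hab hbm heq
  obtain hbm | rfl := hbm.lt_or_eq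
  · exact hy.not_rel (b := b + 1) (by omega) hbm (heq ▸ hy.1.2.2 b hbm)
  · exact hy.notMem_target hab (heq ▸ hy.1.2.1)

end IsShortestWalk

end Walk

lemma sdiff_image_union_image_insert {κ : Type*} {I : Set α} {s : Set κ} {a : κ} {u v : κ → α}
    (h : v a ∉ u '' insert a s) :
    (I \ v '' insert a s) ∪ u '' insert a s = insert (u a) ((I \ v '' s) ∪ u '' s) \ {v a} := by
  rw [image_insert_eq, image_insert_eq] at *
  ext x
  simp only [mem_union, mem_sdiff, mem_insert_iff, mem_singleton_iff] at h ⊢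
  grind

namespace Matroid

variable {M : Matroid α} {I : Set α}

lemma Indep.multi_exchange {κ : Type*} [LinearOrder κ] (hI : M.Indep I) (s : Finset κ)
    {u v : κ → α} (hu : ∀ j ∈ s, u j ∈ M.closure I \ I) (hv : ∀ j ∈ s, v j ∈ I)
    (hexch : ∀ j ∈ s, M.Indep (insert (u j) I \ {v j}))
    (hord : ∀ j ∈ s, ∀ l ∈ s, j < l → ¬ M.Indep (insert (u j) I \ {v l})) :
    M.Indep ((I \ v '' s) ∪ u '' s) ∧ M.closure ((I \ v '' s) ∪ u '' s) = M.closure I := by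
  classical
  induction s using Finset.induction_on_min with
  | empty => simpa using hI
  | insert a s has ih =>
    simp only [Finset.mem_insert, forall_eq_or_imp] at hu hv hexch hord
    obtain ⟨hJ, hJcl⟩ := ih hu.2 hv.2 hexch.2 fun j hj l hl => hord.2 j hj |>.2 l hl
    set J := (I \ v '' s) ∪ u '' s
    have huJ : u a ∉ J := by
      rintro (⟨hua, -⟩ | ⟨l, hl, hul⟩)
      · exact hu.1.2 hua
      · exact hord.1.2 l hl (has l hl) (hul ▸ hexch.2 l hl)
    have hucl : u a ∈ M.closure J := hJcl ▸ hu.1.1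
    have hC := hI.fundCircuit_isCircuit hu.1.1 hu.1.2
    -- the fundamental circuit of `u a` avoids the `v l`, `l ∈ s`, so it survives the exchanges
    have hCJ : M.fundCircuit (u a) I = M.fundCircuit (u a) J := by
      refine hC.eq_fundCircuit_of_subset hJ fun x hx => ?_
      obtain rfl | hxI := M.fundCircuit_subset_insert (u a) I hx
      · exact mem_insert _ _
      refine mem_insert_of_mem _ (Or.inl ⟨hxI, ?_⟩)
      rintro ⟨l, hl, rfl⟩
      exact hord.1.2 l hl (has l hl) ((hI.mem_fundCircuit_iff hu.1.1 hu.1.2).1 hx)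
    have hva : v a ∈ M.fundCircuit (u a) J :=
      hCJ ▸ (hI.mem_fundCircuit_iff hu.1.1 hu.1.2).2 hexch.1
    have hvu : v a ∉ u '' insert a ↑s := by
      rintro ⟨j, rfl | hj, heq⟩
      exacts [hu.1.2 (heq ▸ hv.1), (hu.2 j hj).2 (heq ▸ hv.1)]
    rw [Finset.coe_insert, sdiff_image_union_image_insert hvu,
      hJ.closure_insert_sdiff_eq_of_mem_closure hucl, hJcl]
    · exact ⟨(hJ.mem_fundCircuit_iff hucl huJ).1 hva, rfl⟩
    refine M.closure_subset_closure ?_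
      ((hCJ ▸ hC).mem_closure_sdiff_singleton_of_mem hva)
    exact sdiff_subset_sdiff_left (M.fundCircuit_subset_insert _ _)

end Matroid

section Load

variable {ι : Type*}

noncomputable def load (I : ι → Set α) (e : α) : ℕ := {i | e ∈ I i}.ncard

lemma sum_ncard_inter_eq_sum_load [Fintype ι] (I : ι → Set α) (X : Finset α) :
    ∑ i, (I i ∩ X).ncard = ∑ e ∈ X, load I e := by
  classical
  have hI : ∀ i, (I i ∩ X).ncard = ∑ e ∈ X, if e ∈ I i then 1 else 0 := fun i => by
    rw [← Finset.card_filter, ← ncard_coe_finset, Finset.coe_filter]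
    congr 1
    ext e
    simp [and_comm]
  have hload : ∀ e, load I e = ∑ i, if e ∈ I i then 1 else 0 := fun e => by
    rw [← Finset.card_filter, load, ← ncard_coe_finset, Finset.coe_filter]
    simp
  simp only [hI, hload]
  exact Finset.sum_comm

end Load

namespace Matroid

variable {ι : Type*} {M : Matroid α} {I : ι → Set α} {t : ℕ}

def ExchangeArc (M : Matroid α) (I : ι → Set α) (y x : α) : Prop :=
  ∃ i, y ∉ I i ∧ x ∈ I i ∧ M.Indep (insert y (I i) \ {x})

def augmentable (M : Matroid α) (I : ι → Set α) : Set α :=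
  {y | ∃ i, y ∉ I i ∧ M.Indep (insert y (I i))}

def underloaded (M : Matroid α) (I : ι → Set α) (t : ℕ) : Set α :=
  {e ∈ M.E | load I e < t}

lemma isBasis_inter_of_forall_exchangeArc (hI : ∀ i, M.Indep (I i)) {R : Set α} (hRE : R ⊆ M.E)
    (hR : ∀ y ∈ R, ∀ x, M.ExchangeArc I y x → x ∈ R) (hRaug : Disjoint R (M.augmentable I))
    (i : ι) : M.IsBasis (I i ∩ R) R := by
  refine ((hI i).subset inter_subset_left).isBasis_of_subset_of_subset_closure
    inter_subset_right fun y hy => ?_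
  by_cases hyI : y ∈ I i
  · exact M.mem_closure_of_mem' ⟨hyI, hy⟩ (hRE hy)
  have hycl : y ∈ M.closure (I i) := by
    by_contra hycl
    exact hRaug.notMem_of_mem_left hy
      ⟨i, hyI, ((hI i).insert_indep_iff_of_notMem hyI).2 ⟨hRE hy, hycl⟩⟩
  have hC := (hI i).fundCircuit_isCircuit hycl hyI
  refine M.closure_subset_closure (fun x hx => ?_)
    (hC.mem_closure_sdiff_singleton_of_mem (M.mem_fundCircuit y (I i)))
  have hxI : x ∈ I i := by
    obtain ⟨hxC, hxy⟩ := hx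
    exact (M.fundCircuit_subset_insert y (I i) hxC).resolve_left hxy
  exact ⟨hxI, hR y hy x ⟨i, hyI, hxI, ((hI i).mem_fundCircuit_iff hycl hyI).1 hx.1⟩⟩

lemma sum_ncard_eq_of_forall_exchangeArc [Fintype ι] [M.Finite] (hI : ∀ i, M.Indep (I i))
    (hload : ∀ e, load I e ≤ t) {R : Set α} (hRE : R ⊆ M.E) (hsrc : M.underloaded I t ⊆ R)
    (hR : ∀ y ∈ R, ∀ x, M.ExchangeArc I y x → x ∈ R) (hRaug : Disjoint R (M.augmentable I)) :
    ∑ i, (I i).ncard = Fintype.card ι * mrk M R + t * (M.E \ R).ncard := by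
  have hfin : (M.E \ R).Finite := M.ground_finite.sdiff
  have hout : ∀ e ∈ hfin.toFinset, load I e = t := fun e he => by
    rw [Finite.mem_toFinset] at he
    exact (hload e).antisymm (not_lt.1 fun hlt => he.2 (hsrc ⟨he.1, hlt⟩))
  calc ∑ i, (I i).ncard = ∑ i, ((I i ∩ R).ncard + (I i ∩ ↑hfin.toFinset).ncard) := by
        refine Finset.sum_congr rfl fun i _ => ?_
        rw [Finite.coe_toFinset, ← inter_sdiff_assoc, inter_eq_left.2 (hI i).subset_ground,
          ncard_inter_add_ncard_sdiff_eq_ncard _ _ (hI i).finite]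
    _ = Fintype.card ι * mrk M R + t * (M.E \ R).ncard := by
        rw [Finset.sum_add_distrib, sum_ncard_inter_eq_sum_load, Finset.sum_congr rfl hout,
          Finset.sum_congr rfl fun i _ =>
            (isBasis_inter_of_forall_exchangeArc hI hRE hR hRaug i).isBasis'.mrk_eq_ncard.symm]
        simp [ncard_eq_toFinset_card _ hfin, mul_comm]

end Matroid

section ExchangeAlong

variable {ι : Type*} {I : ι → Set α} {m : ℕ} {y : ℕ → α} {c : ℕ → ι}

-- Along a walk `y`, member `c τ` (`τ < m`) gives up `y (τ + 1)` for `y τ`, and member `c m`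
-- receives `y m`.
def exchangeAlong (I : ι → Set α) (m : ℕ) (y : ℕ → α) (c : ℕ → ι) (i : ι) : Set α :=
  (I i \ (fun τ => y (τ + 1)) '' {τ | τ < m ∧ c τ = i}) ∪ y '' {τ | τ ≤ m ∧ c τ = i}

lemma exchangeAlong_eq (I : ι → Set α) (m : ℕ) (y : ℕ → α) (c : ℕ → ι) (i : ι) :
    exchangeAlong I m y c i = ((I i \ (fun τ => y (τ + 1)) '' {τ | τ < m ∧ c τ = i}) ∪
      y '' {τ | τ < m ∧ c τ = i}) ∪ {x | i = c m ∧ x = y m} := by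
  ext x
  simp only [exchangeAlong, mem_union, mem_sdiff, mem_image, mem_ofPred_eq]
  constructor
  · rintro (h | ⟨τ, ⟨hτ, rfl⟩, rfl⟩)
    · exact Or.inl (Or.inl h)
    · obtain hτ | rfl := hτ.lt_or_eq
      exacts [Or.inl (Or.inr ⟨τ, ⟨hτ, rfl⟩, rfl⟩), Or.inr ⟨rfl, rfl⟩]
  · rintro ((h | ⟨τ, ⟨hτ, hτc⟩, rfl⟩) | ⟨rfl, rfl⟩)
    exacts [Or.inl h, Or.inr ⟨τ, ⟨hτ.le, hτc⟩, rfl⟩, Or.inr ⟨m, ⟨le_rfl, rfl⟩, rfl⟩]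

lemma load_exchangeAlong_le [Finite ι] {t : ℕ} (hy : InjOn y (Iic m))
    (hin : ∀ τ < m, y (τ + 1) ∈ I (c τ)) (h0 : load I (y 0) < t) (hload : ∀ e, load I e ≤ t)
    (e : α) : load (exchangeAlong I m y c) e ≤ t := by
  have hmem : ∀ i, e ∈ exchangeAlong I m y c i ↔
      (e ∈ I i ∧ ∀ τ < m, c τ = i → y (τ + 1) ≠ e) ∨ ∃ τ ≤ m, c τ = i ∧ y τ = e := by
    simp [exchangeAlong, and_assoc]
  by_cases he : ∃ σ ≤ m, y σ = e
  swap
  · refine (ncard_le_ncard (fun i hi => ?_) (toFinite _)).trans (hload e)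
    obtain ⟨hi, -⟩ | hi := (hmem i).1 hi
    exacts [hi, (he (hi.imp fun τ h => ⟨h.1, h.2.2⟩)).elim]
  obtain ⟨σ, hσ, rfl⟩ := he
  -- `y σ` now lies in the member `c σ`, and no longer in `c (σ - 1)`
  have hnew : ∀ i, (∃ τ ≤ m, c τ = i ∧ y τ = y σ) → i = c σ := by
    rintro i ⟨τ, hτ, rfl, heq⟩
    rw [hy hτ hσ heq]
  cases σ with
  | zero =>
    have hsub : {i | y 0 ∈ exchangeAlong I m y c i} ⊆ insert (c 0) {i | y 0 ∈ I i} := by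
      intro i hi
      obtain ⟨hi, -⟩ | hi := (hmem i).1 hi
      exacts [mem_insert_of_mem _ hi, mem_insert_iff.2 (Or.inl (hnew i hi))]
    exact (ncard_le_ncard hsub (toFinite _)).trans ((ncard_insert_le _ _).trans h0)
  | succ σ =>
    have hσI : c σ ∈ {i | y (σ + 1) ∈ I i} := hin σ (by omega)
    have hsub : {i | y (σ + 1) ∈ exchangeAlong I m y c i} ⊆
        insert (c (σ + 1)) ({i | y (σ + 1) ∈ I i} \ {c σ}) := by
      intro i hi
      obtain ⟨hi, hne⟩ | hi := (hmem i).1 hi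
      · exact mem_insert_of_mem _ ⟨hi, fun h => hne σ (by omega) h.symm rfl⟩
      · exact mem_insert_iff.2 (Or.inl (hnew i hi))
    refine (ncard_le_ncard hsub (toFinite _)).trans ((ncard_insert_le _ _).trans ?_)
    have hpos : 0 < load I (y (σ + 1)) := (ncard_pos (toFinite _)).2 ⟨_, hσI⟩
    rw [ncard_sdiff_singleton_of_mem hσI]
    have := hload (y (σ + 1))
    unfold load at hpos this
    omega

end ExchangeAlong

namespace Matroid

section

variable {ι : Type*} {M : Matroid α} {I : ι → Set α} {m : ℕ} {y : ℕ → α} {c : ℕ → ι} {S : Set α}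

lemma multi_exchange_of_isShortestWalk (hI : ∀ i, M.Indep (I i))
    (hy : IsShortestWalk (M.ExchangeArc I) S (M.augmentable I) m y)
    (hc : ∀ τ < m, y τ ∉ I (c τ) ∧ y (τ + 1) ∈ I (c τ) ∧
      M.Indep (insert (y τ) (I (c τ)) \ {y (τ + 1)})) (i : ι) :
    let J := (I i \ (fun τ => y (τ + 1)) '' {τ | τ < m ∧ c τ = i}) ∪ y '' {τ | τ < m ∧ c τ = i}
    M.Indep J ∧ M.closure J = M.closure (I i) := by
  classical
  set s := (Finset.range m).filter (fun τ => c τ = i)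
  have hs : ∀ τ, τ ∈ s ↔ τ < m ∧ c τ = i := by simp [s]
  have hu : ∀ τ ∈ s, y τ ∈ M.closure (I i) \ I i := by
    intro τ hτs
    obtain ⟨hτ, rfl⟩ := (hs τ).1 hτs
    obtain ⟨hout, hin, hexch⟩ := hc τ hτ
    refine ⟨by_contra fun hcl => hy.notMem_target hτ ⟨c τ, hout, ?_⟩, hout⟩
    refine ((hI _).insert_indep_iff_of_notMem hout).2 ⟨hexch.subset_ground ?_, hcl⟩
    exact ⟨mem_insert _ _, fun h => hout (h ▸ hin)⟩
  have hcoe : (s : Set ℕ) = {τ | τ < m ∧ c τ = i} := by ext τ; simp [hs]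
  rw [← hcoe]
  refine (hI i).multi_exchange s hu (fun τ hτ => ((hs τ).1 hτ).2 ▸ (hc τ ((hs τ).1 hτ).1).2.1)
    (fun τ hτ => ((hs τ).1 hτ).2 ▸ (hc τ ((hs τ).1 hτ).1).2.2) fun τ hτ τ' hτ' hlt hexch => ?_
  obtain ⟨hτm, rfl⟩ := (hs τ).1 hτ
  obtain ⟨hτ'm, hτ'c⟩ := (hs τ').1 hτ'
  exact hy.not_rel (a := τ) (b := τ' + 1) (by omega) hτ'm
    ⟨c τ, (hc τ hτm).1, hτ'c ▸ (hc τ' hτ'm).2.1, hexch⟩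

lemma indep_exchangeAlong [M.RankFinite] (hI : ∀ i, M.Indep (I i))
    (hy : IsShortestWalk (M.ExchangeArc I) S (M.augmentable I) m y)
    (hc : ∀ τ < m, y τ ∉ I (c τ) ∧ y (τ + 1) ∈ I (c τ) ∧
      M.Indep (insert (y τ) (I (c τ)) \ {y (τ + 1)}))
    (hcm : y m ∉ I (c m) ∧ M.Indep (insert (y m) (I (c m)))) (i : ι) :
    M.Indep (exchangeAlong I m y c i) ∧ (I i).ncard ≤ (exchangeAlong I m y c i).ncard ∧
      (i = c m → (I i).ncard < (exchangeAlong I m y c i).ncard) := by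
  obtain ⟨hJ, hJcl⟩ := multi_exchange_of_isShortestWalk hI hy hc i
  rw [exchangeAlong_eq]
  set J := (I i \ (fun τ => y (τ + 1)) '' {τ | τ < m ∧ c τ = i}) ∪ y '' {τ | τ < m ∧ c τ = i}
  have hJcard := (hI i).ncard_eq_of_closure_eq hJ hJcl.symm
  by_cases hi : i = c m
  · subst hi
    have hym : y m ∈ M.E \ M.closure J :=
      hJcl ▸ ((hI _).insert_indep_iff_of_notMem hcm.1).1 hcm.2
    have hymJ : y m ∉ J := fun h => hym.2 (M.mem_closure_of_mem' h)
    rw [show {x | c m = c m ∧ x = y m} = {y m} by simp, union_singleton,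
      ncard_insert_of_notMem hymJ hJ.finite, hJcard]
    exact ⟨(hJ.insert_indep_iff_of_notMem hymJ).2 hym, by omega, fun _ => by omega⟩
  · rw [show {x | i = c m ∧ x = y m} = ∅ by simp [hi], union_empty, hJcard]
    exact ⟨hJ, le_rfl, fun h => (hi h).elim⟩

end

section

variable {ι : Type*} [Fintype ι] {M : Matroid α} {I : ι → Set α} {t : ℕ}

lemma exists_sum_ncard_lt_of_isWalk [M.RankFinite] (hI : ∀ i, M.Indep (I i))
    (hload : ∀ e, load I e ≤ t)
    (hwalk : ∃ m y, IsWalk (M.ExchangeArc I) (M.underloaded I t) (M.augmentable I) m y) :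
    ∃ I' : ι → Set α, (∀ i, M.Indep (I' i)) ∧ (∀ e, load I' e ≤ t) ∧
      ∑ i, (I i).ncard < ∑ i, (I' i).ncard := by
  obtain ⟨m, y, hy⟩ := exists_isShortestWalk hwalk
  obtain ⟨j, hj⟩ := hy.1.2.1
  choose c' hc' using hy.1.2.2
  let c : ℕ → ι := fun τ => if h : τ < m then c' τ h else j
  have hc : ∀ τ < m, y τ ∉ I (c τ) ∧ y (τ + 1) ∈ I (c τ) ∧
      M.Indep (insert (y τ) (I (c τ)) \ {y (τ + 1)}) := fun τ hτ => by
    simpa [c, hτ] using hc' τ hτ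
  have hexch := indep_exchangeAlong hI hy hc (by simpa [c] using hj)
  refine ⟨exchangeAlong I m y c, fun i => (hexch i).1,
    load_exchangeAlong_le hy.injOn (fun τ hτ => (hc τ hτ).2.1) hy.1.1.2 hload,
    Finset.sum_lt_sum (fun i _ => (hexch i).2.1) ⟨c m, Finset.mem_univ _, (hexch _).2.2 rfl⟩⟩

/-- Edmonds' base packing theorem, with multiplicity `t`. -/
theorem exists_isBase_load_le [M.Finite]
    (h : ∀ X ⊆ M.E, Fintype.card ι * mrk M M.E ≤ Fintype.card ι * mrk M X + t * (M.E \ X).ncard) :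
    ∃ B : ι → Set α, (∀ i, M.IsBase (B i)) ∧ ∀ e, load B e ≤ t := by
  let F := {I : ι → Set α | (∀ i, M.Indep (I i)) ∧ ∀ e, load I e ≤ t}
  have hF : F.Finite := (Finite.pi' fun _ => M.ground_finite.finite_subsets).subset
    fun I hI i => (hI.1 i).subset_ground
  obtain ⟨I, ⟨hI, hload⟩, hmax⟩ := exists_max_image F (fun I => ∑ i, (I i).ncard) hF
    ⟨fun _ => ∅, fun _ => M.empty_indep, by simp [load]⟩
  let R := {x ∈ M.E | ∃ m y, IsWalk (M.ExchangeArc I) (M.underloaded I t) {x} m y}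
  have hRaug : Disjoint R (M.augmentable I) := by
    refine disjoint_left.2 fun x ⟨_, m, y, hy⟩ hx => ?_
    obtain ⟨I', hI', hload', hlt⟩ := exists_sum_ncard_lt_of_isWalk hI hload
      ⟨m, y, hy.1, mem_singleton_iff.1 hy.2.1 ▸ hx, hy.2.2⟩
    exact (hmax I' ⟨hI', hload'⟩).not_gt hlt
  have hR : ∀ y ∈ R, ∀ x, M.ExchangeArc I y x → x ∈ R := by
    rintro y ⟨-, m, z, hz⟩ x hyx
    obtain ⟨i, -, hxI, -⟩ := id hyx
    exact ⟨(hI i).subset_ground hxI, m + 1, _, hz.snoc (mem_singleton_iff.1 hz.2.1 ▸ hyx)⟩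
  have hsum := sum_ncard_eq_of_forall_exchangeArc hI hload (sep_subset _ _)
    (fun e he => ⟨he.1, 0, fun _ => e, he, rfl, by simp⟩) hR hRaug
  have hle : ∀ i ∈ Finset.univ, (I i).ncard ≤ mrk M M.E :=
    fun i _ => (hI i).ncard_le_mrk (hI i).subset_ground
  have htight : ∑ i, (I i).ncard = ∑ _i : ι, mrk M M.E := by
    refine (Finset.sum_le_sum hle).antisymm ?_
    rw [Finset.sum_const, Finset.card_univ, smul_eq_mul, hsum]
    exact h R (sep_subset _ _)
  refine ⟨I, fun i => (hI i).isBase_of_mrk_le_ncard ?_, hload⟩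
  exact ((Finset.sum_eq_sum_iff_of_le hle).1 htight i (Finset.mem_univ i)).ge

end

section

variable {M : Matroid α} {A : Set α}

lemma exists_mem_card_mul_mrk_le {ι : Type*} [Fintype ι] [M.Finite] {B : ι → Set α}
    (hB : ∀ i, M.IsBase (B i)) (hA : A ⊆ M.E) (hAne : A.Nonempty) :
    ∃ e ∈ A, Fintype.card ι * mrk M M.E ≤
      Fintype.card ι * mrk M (M.E \ A) + A.ncard * load B e := by
  have hAfin : A.Finite := M.ground_finite.subset hA
  have hsum : Fintype.card ι * mrk M M.E ≤
      Fintype.card ι * mrk M (M.E \ A) + ∑ e ∈ hAfin.toFinset, load B e := by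
    rw [← sum_ncard_inter_eq_sum_load, Finite.coe_toFinset]
    calc Fintype.card ι * mrk M M.E = ∑ i, ((B i ∩ A).ncard + (B i \ A).ncard) := by
          simp [ncard_inter_add_ncard_sdiff_eq_ncard _ _ (hB _).indep.finite, (hB _).ncard_eq_mrk]
      _ ≤ ∑ i, ((B i ∩ A).ncard + mrk M (M.E \ A)) := by
          gcongr with i
          exact ((hB i).indep.subset sdiff_subset).ncard_le_mrk
            (sdiff_subset_sdiff_left (hB i).subset_ground)
      _ = _ := by simp [Finset.sum_add_distrib, add_comm]
  obtain ⟨e, he, hmax⟩ := Finset.exists_max_image hAfin.toFinset (load B) (by simpa)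
  refine ⟨e, by simpa using he, hsum.trans (Nat.add_le_add_left ?_ _)⟩
  rw [ncard_eq_toFinset_card _ hAfin, ← smul_eq_mul]
  exact Finset.sum_le_card_nsmul _ _ _ hmax

lemma sub_div_ncard_le_sSup_relLoad [M.Finite] {k : ℕ} (hk : 0 < k) {Bs : Fin k → Set α}
    (hBs : ∀ i, M.IsBase (Bs i)) (hA : A ⊆ M.E) (hAne : A.Nonempty) :
    ((mrk M M.E : ℝ) - mrk M (M.E \ A)) / A.ncard ≤ sSup ((fun e => relLoad Bs e) '' M.E) := by
  obtain ⟨e, heA, he⟩ := exists_mem_card_mul_mrk_le hBs hA hAne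
  rw [Fintype.card_fin] at he
  refine le_trans ?_ (le_csSup (M.ground_finite.image _).bddAbove (mem_image_of_mem _ (hA heA)))
  have hApos : (0 : ℝ) < A.ncard := by exact_mod_cast (ncard_pos (M.ground_finite.subset hA)).2 hAne
  have hk' : (0 : ℝ) < k := by exact_mod_cast hk
  have he' : (k : ℝ) * mrk M M.E ≤ k * mrk M (M.E \ A) + A.ncard * load Bs e := by
    exact_mod_cast he
  show _ ≤ (load Bs e : ℝ) / k
  rw [div_le_div_iff₀ hApos hk']
  linarith

lemma phiM_le (hA : A ⊆ M.E) (hdrop : mrk M (M.E \ A) < mrk M M.E) :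
    PhiM M ≤ (A.ncard : ℝ) / ((mrk M M.E : ℝ) - (mrk M (M.E \ A) : ℝ)) := by
  refine csInf_le ⟨0, ?_⟩ ⟨A, hA, hdrop, rfl⟩
  rintro _ ⟨B, -, hB, rfl⟩
  exact div_nonneg (Nat.cast_nonneg _) (sub_nonneg.2 (by exact_mod_cast hB.le))

lemma exists_attainsPhi [M.Finite] (hrk : 1 ≤ mrk M M.E) : ∃ A, AttainsPhi M A := by
  set ratio : Set α → ℝ := fun A => A.ncard / ((mrk M M.E : ℝ) - mrk M (M.E \ A))
  have hfin : {x : ℝ | ∃ A ⊆ M.E, mrk M (M.E \ A) < mrk M M.E ∧ x = ratio A}.Finite := by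
    refine (M.ground_finite.finite_subsets.image ratio).subset ?_
    rintro _ ⟨A, hA, -, rfl⟩
    exact mem_image_of_mem _ hA
  have hne : {x : ℝ | ∃ A ⊆ M.E, mrk M (M.E \ A) < mrk M M.E ∧ x = ratio A}.Nonempty :=
    ⟨_, M.E, subset_rfl, by rw [sdiff_self, mrk_empty]; omega, rfl⟩
  obtain ⟨A, hA, hdrop, hPhi⟩ := hne.csInf_mem hfin
  exact ⟨A, hA, hdrop, hPhi.symm⟩

namespace AttainsPhi

lemma nonempty (hA : AttainsPhi M A) : A.Nonempty := by
  refine nonempty_iff_ne_empty.2 fun h => ?_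
  have := hA.2.1
  simp [h] at this

lemma packing_condition (hA : AttainsPhi M A) {X : Set α} (hX : X ⊆ M.E) :
    A.ncard * mrk M M.E ≤
      A.ncard * mrk M X + (mrk M M.E - mrk M (M.E \ A)) * (M.E \ X).ncard := by
  obtain ⟨-, hdrop, hPhi⟩ := hA
  by_cases hXr : mrk M M.E ≤ mrk M X
  · exact le_add_right (Nat.mul_le_mul_left _ hXr)
  push Not at hXr
  have h := phiM_le (M := M) (A := M.E \ X) sdiff_subset (by rwa [sdiff_sdiff_cancel_left hX])
  rw [sdiff_sdiff_cancel_left hX, ← hPhi, div_le_div_iff₀ (by simpa) (by simpa)] at h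
  have hcast : ((A.ncard * mrk M M.E : ℕ) : ℝ) ≤
      ((A.ncard * mrk M X + (mrk M M.E - mrk M (M.E \ A)) * (M.E \ X).ncard : ℕ) : ℝ) := by
    push_cast [Nat.cast_sub hdrop.le]
    linarith
  exact_mod_cast hcast

end AttainsPhi

end

end Matroid

/-- The maximum over base collections of the reciprocal of the maximum relative load
exists and equals `Φ_M`. -/
theorem stmt_3 (M : Matroid α) (hfin : M.E.Finite) (hrk : 1 ≤ mrk M M.E) :
    (∃ (k : ℕ) (Bs : Fin k → Set α), 0 < k ∧ (∀ i, M.IsBase (Bs i)) ∧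
      1 / sSup ((fun e => relLoad Bs e) '' M.E) = PhiM M) ∧
    (∀ (k : ℕ) (Bs : Fin k → Set α), 0 < k → (∀ i, M.IsBase (Bs i)) →
      1 / sSup ((fun e => relLoad Bs e) '' M.E) ≤ PhiM M) := by
  have : M.Finite := ⟨hfin⟩
  obtain ⟨A, hA⟩ := exists_attainsPhi hrk
  have hk : 0 < A.ncard := (ncard_pos (hfin.subset hA.1)).2 hA.nonempty
  have hratio : 0 < ((mrk M M.E : ℝ) - mrk M (M.E \ A)) / A.ncard :=
    div_pos (sub_pos.2 (by exact_mod_cast hA.2.1)) (by exact_mod_cast hk)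
  have hPhi : PhiM M = 1 / (((mrk M M.E : ℝ) - mrk M (M.E \ A)) / A.ncard) := by
    rw [one_div_div, hA.2.2]
  refine ⟨?_, fun k Bs hk hBs => hPhi ▸ one_div_le_one_div_of_le hratio
    (sub_div_ncard_le_sSup_relLoad hk hBs hA.1 hA.nonempty)⟩
  obtain ⟨Bs, hBs, hload⟩ := exists_isBase_load_le (ι := Fin A.ncard)
    (t := mrk M M.E - mrk M (M.E \ A)) (by simpa using fun X => hA.packing_condition (X := X))
  have hup : sSup ((fun e => relLoad Bs e) '' M.E) ≤
      ((mrk M M.E : ℝ) - mrk M (M.E \ A)) / A.ncard := by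
    refine csSup_le ((hA.nonempty.mono hA.1).image _) ?_
    rintro _ ⟨e, -, rfl⟩
    show (load Bs e : ℝ) / A.ncard ≤ _
    gcongr
    rw [← Nat.cast_sub hA.2.1.le]
    exact_mod_cast hload e
  refine ⟨A.ncard, Bs, hk, hBs, ?_⟩
  rw [hPhi, le_antisymm hup (sub_div_ncard_le_sSup_relLoad hk hBs hA.1 hA.nonempty)]
end

section
/- Let M be a matroid on a finite ground set E with rk(E) ≥ 1, and let S and T be two subsets of E that both attain Φ_M. If T \ S ≠ ∅, then rk(E\S) − rk(E\(S∪T)) ≥ 1 and |T \ S| / (rk(E\S) − rk(E\(S∪T))) = Φ_M; that is, the set T \ S attains the fractional packing number of the restriction M|(E\S), and that packing number equals Φ_M. -/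
open Set Matroid

variable {α : Type*}

/-! The deficiency `d A = rk E - rk (E \ A)` is supermodular, by submodularity of the rank on
`E \ S` and `E \ T`, while `A ↦ |A|` is modular. As `Φ d ≤ |·|` everywhere, with equality at `S`
and `T`, equality is forced at `S ∪ T`; subtracting the equality at `S` gives
`|T \ S| = Φ (rk (E \ S) - rk (E \ (S ∪ T)))`. The same subtraction shows that no set in
`M ↾ (E \ S)` has ratio below `Φ`. -/

section RankFunction

variable {M : Matroid α} {R X : Set α}

lemma mrk_eq_eRk (hX : M.IsRkFinite X) : (mrk M X : ℕ∞) = M.eRk X := by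
  obtain ⟨I, hI, hIfin⟩ := hX.exists_finite_isBasis'
  suffices mrk M X = I.ncard by rw [this, hIfin.cast_ncard_eq, hI.encard_eq_eRk]
  refine IsGreatest.csSup_eq ⟨⟨I, hI.indep, hI.subset, rfl⟩, ?_⟩
  rintro _ ⟨J, hJ, hJX, rfl⟩
  have hJfin := hX.finite_of_indep_subset hJ hJX
  rw [← ENat.natCast_le_natCast, hJfin.cast_ncard_eq, hIfin.cast_ncard_eq, hI.encard_eq_eRk]
  exact hJ.encard_le_eRk_of_subset hJX

lemma mrk_inter_add_mrk_union_le [M.RankFinite] (X Y : Set α) :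
    mrk M (X ∩ Y) + mrk M (X ∪ Y) ≤ mrk M X + mrk M Y := by
  rw [← ENat.natCast_le_natCast]
  push_cast
  simp only [mrk_eq_eRk (M.isRkFinite_set _)]
  exact M.eRk_inter_add_eRk_union_le X Y

lemma mrk_restrict (M : Matroid α) (hXR : X ⊆ R) : mrk (M ↾ R) X = mrk M X := by
  simp only [mrk, restrict_indep_iff]
  congr! 3 with n
  exact exists_congr fun I ↦ ⟨fun ⟨⟨hI, _⟩, hIX, hn⟩ ↦ ⟨hI, hIX, hn⟩,
    fun ⟨hI, hIX, hn⟩ ↦ ⟨⟨hI, hIX.trans hXR⟩, hIX, hn⟩⟩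

end RankFunction

section PackingNumber

variable {M : Matroid α} {S T A : Set α}

lemma ncard_div_nonneg_of_mrk_lt (hlt : mrk M (M.E \ A) < mrk M M.E) :
    0 ≤ (A.ncard : ℝ) / ((mrk M M.E : ℝ) - mrk M (M.E \ A)) :=
  div_nonneg (Nat.cast_nonneg _) (sub_nonneg.2 (Nat.cast_le.2 hlt.le))

lemma PhiM_nonneg (M : Matroid α) : 0 ≤ PhiM M := by
  refine Real.sInf_nonneg ?_
  rintro _ ⟨A, -, hlt, rfl⟩
  exact ncard_div_nonneg_of_mrk_lt hlt

lemma PhiM_mul_le (hA : A ⊆ M.E) :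
    PhiM M * ((mrk M M.E : ℝ) - mrk M (M.E \ A)) ≤ A.ncard := by
  by_cases hlt : mrk M (M.E \ A) < mrk M M.E
  · have hpos : (0 : ℝ) < (mrk M M.E : ℝ) - mrk M (M.E \ A) := sub_pos.2 (Nat.cast_lt.2 hlt)
    have hbdd : BddBelow {x : ℝ | ∃ A ⊆ M.E, mrk M (M.E \ A) < mrk M M.E ∧
        x = (A.ncard : ℝ) / ((mrk M M.E : ℝ) - (mrk M (M.E \ A) : ℝ))} := by
      refine ⟨0, ?_⟩
      rintro _ ⟨B, -, hBlt, rfl⟩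
      exact ncard_div_nonneg_of_mrk_lt hBlt
    rw [← le_div_iff₀ hpos]
    exact csInf_le hbdd ⟨A, hA, hlt, rfl⟩
  · have hdef : (mrk M M.E : ℝ) - mrk M (M.E \ A) ≤ 0 := by
      simpa only [sub_nonpos, Nat.cast_le, not_lt] using hlt
    exact (mul_nonpos_of_nonneg_of_nonpos (PhiM_nonneg M) hdef).trans (Nat.cast_nonneg _)

lemma PhiM_eq_of_forall_mul_le {c : ℝ} (hA : A ⊆ M.E) (hlt : mrk M (M.E \ A) < mrk M M.E)
    (hc : (A.ncard : ℝ) / ((mrk M M.E : ℝ) - mrk M (M.E \ A)) = c)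
    (hmin : ∀ B ⊆ M.E, c * ((mrk M M.E : ℝ) - mrk M (M.E \ B)) ≤ B.ncard) : PhiM M = c := by
  refine IsLeast.csInf_eq ⟨⟨A, hA, hlt, hc.symm⟩, ?_⟩
  rintro _ ⟨B, hB, hBlt, rfl⟩
  have hpos : (0 : ℝ) < (mrk M M.E : ℝ) - mrk M (M.E \ B) := sub_pos.2 (Nat.cast_lt.2 hBlt)
  rw [le_div_iff₀ hpos]
  exact hmin B hB

lemma AttainsPhi.ncard_eq (hA : AttainsPhi M A) :
    (A.ncard : ℝ) = PhiM M * ((mrk M M.E : ℝ) - mrk M (M.E \ A)) := by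
  obtain ⟨-, hlt, hratio⟩ := hA
  have hpos : (0 : ℝ) < (mrk M M.E : ℝ) - mrk M (M.E \ A) := sub_pos.2 (Nat.cast_lt.2 hlt)
  rwa [div_eq_iff hpos.ne'] at hratio

section Finite

variable [M.Finite]

lemma AttainsPhi.ncard_union_eq (hS : AttainsPhi M S) (hT : AttainsPhi M T) :
    ((S ∪ T).ncard : ℝ) = PhiM M * ((mrk M M.E : ℝ) - mrk M (M.E \ (S ∪ T))) := by
  have hsubmod : (mrk M (M.E \ (S ∪ T)) : ℝ) + mrk M (M.E \ (S ∩ T)) ≤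
      mrk M (M.E \ S) + mrk M (M.E \ T) := by
    have h := mrk_inter_add_mrk_union_le (M := M) (M.E \ S) (M.E \ T)
    rw [sdiff_inter_sdiff, ← sdiff_inter] at h
    exact_mod_cast h
  have hcard : ((S ∪ T).ncard : ℝ) + (S ∩ T).ncard = S.ncard + T.ncard := by
    exact_mod_cast ncard_union_add_ncard_inter S T (M.ground_finite.subset hS.1)
      (M.ground_finite.subset hT.1)
  have hunion := PhiM_mul_le (union_subset hS.1 hT.1)
  have hinter := PhiM_mul_le ((inter_subset_left (t := T)).trans hS.1)
  have hscaled := mul_le_mul_of_nonneg_left hsubmod (PhiM_nonneg M)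
  linarith [hS.ncard_eq, hT.ncard_eq]

lemma AttainsPhi.ncard_sdiff_eq (hS : AttainsPhi M S) (hT : AttainsPhi M T) :
    ((T \ S).ncard : ℝ) = PhiM M * ((mrk M (M.E \ S) : ℝ) - mrk M (M.E \ (S ∪ T))) := by
  have hsplit : (S ∪ T).ncard = S.ncard + (T \ S).ncard := by
    rw [← union_sdiff_self, Set.ncard_union_eq disjoint_sdiff_right (M.ground_finite.subset hS.1)
      (M.ground_finite.subset (sdiff_subset.trans hT.1))]
  have hunion := hS.ncard_union_eq hT
  rw [hsplit, Nat.cast_add, hS.ncard_eq] at hunion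
  linarith

lemma AttainsPhi.PhiM_mul_le_of_subset_compl (hS : AttainsPhi M S) (hA : A ⊆ M.E \ S) :
    PhiM M * ((mrk M (M.E \ S) : ℝ) - mrk M (M.E \ (S ∪ A))) ≤ A.ncard := by
  have hsplit : (S ∪ A).ncard = S.ncard + A.ncard :=
    Set.ncard_union_eq (subset_sdiff.1 hA).2.symm (M.ground_finite.subset hS.1)
      (M.ground_finite.subset (hA.trans sdiff_subset))
  have hunion := PhiM_mul_le (union_subset hS.1 (hA.trans sdiff_subset))
  rw [hsplit, Nat.cast_add, hS.ncard_eq] at hunion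
  linarith

lemma AttainsPhi.restrict_compl (hS : AttainsPhi M S) (hA : A ⊆ M.E \ S)
    (hlt : mrk M (M.E \ (S ∪ A)) < mrk M (M.E \ S))
    (hratio : (A.ncard : ℝ) / ((mrk M (M.E \ S) : ℝ) - mrk M (M.E \ (S ∪ A))) = PhiM M) :
    AttainsPhi (M ↾ (M.E \ S)) A ∧ PhiM (M ↾ (M.E \ S)) = PhiM M := by
  have hground : mrk (M ↾ (M.E \ S)) (M.E \ S) = mrk M (M.E \ S) := mrk_restrict M subset_rfl
  have hcompl (B : Set α) : mrk (M ↾ (M.E \ S)) ((M.E \ S) \ B) = mrk M (M.E \ (S ∪ B)) := by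
    rw [mrk_restrict M sdiff_subset, sdiff_sdiff]
  have hPhi : PhiM (M ↾ (M.E \ S)) = PhiM M := by
    refine PhiM_eq_of_forall_mul_le (A := A) hA ?_ ?_ fun B hB ↦ ?_ <;>
      simp only [restrict_ground_eq, hground, hcompl]
    exacts [hlt, hratio, hS.PhiM_mul_le_of_subset_compl hB]
  refine ⟨⟨hA, ?_, ?_⟩, hPhi⟩ <;> simp only [restrict_ground_eq, hground, hcompl, hPhi]
  exacts [hlt, hratio]

end Finite

end PackingNumber

theorem stmt_6_general (M : Matroid α) (hfin : M.E.Finite)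
    (S T : Set α) (hS : AttainsPhi M S) (hT : AttainsPhi M T)
    (hTS : (T \ S).Nonempty) :
    mrk M (M.E \ (S ∪ T)) < mrk M (M.E \ S) ∧
    ((T \ S).ncard : ℝ) / ((mrk M (M.E \ S) : ℝ) - (mrk M (M.E \ (S ∪ T)) : ℝ)) = PhiM M ∧
    AttainsPhi (M ↾ (M.E \ S)) (T \ S) ∧
    PhiM (M ↾ (M.E \ S)) = PhiM M := by
  have : M.Finite := ⟨hfin⟩
  have hcard := hS.ncard_sdiff_eq hT
  have hlt : mrk M (M.E \ (S ∪ T)) < mrk M (M.E \ S) := by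
    by_contra! hle
    have hpos : (0 : ℝ) < (T \ S).ncard := by
      exact_mod_cast (ncard_pos (hfin.subset (sdiff_subset.trans hT.1))).2 hTS
    have hdef : (mrk M (M.E \ S) : ℝ) - mrk M (M.E \ (S ∪ T)) ≤ 0 :=
      sub_nonpos.2 (Nat.cast_le.2 hle)
    linarith [mul_nonpos_of_nonneg_of_nonpos (PhiM_nonneg M) hdef]
  have hratio : ((T \ S).ncard : ℝ) / ((mrk M (M.E \ S) : ℝ) - mrk M (M.E \ (S ∪ T))) =
      PhiM M := by
    rw [div_eq_iff (sub_pos.2 (Nat.cast_lt.2 hlt)).ne', hcard]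
  have hrestrict := hS.restrict_compl (sdiff_subset_sdiff_left hT.1)
    (by rwa [union_sdiff_self]) (by rwa [union_sdiff_self])
  exact ⟨hlt, hratio, hrestrict⟩

/-- Well-definedness of the ideal relative loads: if `S` and `T` both attain `Φ_M` and
`T \ S ≠ ∅`, then `T \ S` attains the packing number of the restriction `M|(E \ S)`,
which equals `Φ_M`. -/
theorem stmt_6 (M : Matroid α) (hfin : M.E.Finite) (hrk : 1 ≤ mrk M M.E)
    (S T : Set α) (hS : AttainsPhi M S) (hT : AttainsPhi M T)
    (hTS : (T \ S).Nonempty) :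
    mrk M (M.E \ (S ∪ T)) < mrk M (M.E \ S) ∧
    ((T \ S).ncard : ℝ) / ((mrk M (M.E \ S) : ℝ) - (mrk M (M.E \ (S ∪ T)) : ℝ)) = PhiM M ∧
    AttainsPhi (M ↾ (M.E \ S)) (T \ S) ∧
    PhiM (M ↾ (M.E \ S)) = PhiM M :=
  stmt_6_general M hfin S T hS hT hTS
end

section
/- Let M be a matroid on a finite ground set E with rk(E) ≥ 1, let B* be a base collection of M satisfying 1 / (max_{e∈E} ℓ^{B*}(e)) = Φ_M, and let A₀ ⊆ E attain Φ_M. Then ℓ^{B*}(e) = 1/Φ_M for every e ∈ A₀, and every base B occurring in B* satisfies |B ∩ A₀| = rk(E) − rk(E\A₀). -/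
open Set Matroid

variable {α : Type*}

/-!
Every base `B` meets `A₀` in at least `rk E - rk (E \ A₀)` elements, because `B \ A₀` is
independent in `E \ A₀`. Double counting, the loads of the elements of `A₀` therefore add up to
at least `|B*| (rk E - rk (E \ A₀)) = |B*| |A₀| / Φ_M`, while the optimality of `B*` bounds every
relative load by `1 / Φ_M`. Hence all these inequalities are equalities.
-/

section Rank

variable {M : Matroid α}

lemma ncard_le_mrk (hfin : M.E.Finite) {I A : Set α} (hI : M.Indep I) (hIA : I ⊆ A)
    (hA : A ⊆ M.E) : I.ncard ≤ mrk M A := by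
  refine le_csSup ⟨A.ncard, ?_⟩ ⟨I, hI, hIA, rfl⟩
  rintro n ⟨J, -, hJA, rfl⟩
  exact ncard_le_ncard hJA (hfin.subset hA)

lemma Matroid.IsBase.mrk_ground_eq_ncard (hfin : M.E.Finite) {B : Set α} (hB : M.IsBase B) :
    mrk M M.E = B.ncard := by
  refine le_antisymm (csSup_le ⟨B.ncard, B, hB.indep, hB.subset_ground, rfl⟩ ?_)
    (ncard_le_mrk hfin hB.indep hB.subset_ground subset_rfl)
  rintro n ⟨I, hI, -, rfl⟩
  obtain ⟨B', hB', hIB'⟩ := hI.exists_isBase_superset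
  calc I.ncard ≤ B'.ncard := ncard_le_ncard hIB' (hfin.subset hB'.subset_ground)
    _ = B.ncard := hB'.ncard_eq_ncard_of_isBase hB

lemma Matroid.IsBase.mrk_ground_le_ncard_inter_add (hfin : M.E.Finite) {B : Set α}
    (hB : M.IsBase B) (A : Set α) : mrk M M.E ≤ (B ∩ A).ncard + mrk M (M.E \ A) := by
  rw [hB.mrk_ground_eq_ncard hfin,
    ← ncard_inter_add_ncard_sdiff_eq_ncard B A (hfin.subset hB.subset_ground)]
  gcongr
  exact ncard_le_mrk hfin (hB.indep.subset sdiff_subset)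
    (sdiff_subset_sdiff_left hB.subset_ground) sdiff_subset

end Rank

section DoubleCounting

variable {ι : Type*} [Fintype ι]

lemma sum_ncard_setOf_mem_eq_sum_ncard_inter (s : Finset α) (B : ι → Set α) :
    ∑ e ∈ s, {i | e ∈ B i}.ncard = ∑ i, (B i ∩ s).ncard := by
  classical
  have := Finset.sum_card_bipartiteAbove_eq_sum_card_bipartiteBelow
    (s := s) (t := Finset.univ) (r := fun e i => e ∈ B i)
  convert this using 2 with e - i -
  · rw [← ncard_coe_finset]; simp [Finset.bipartiteAbove]
  · rw [← ncard_coe_finset]; simp [Finset.bipartiteBelow, inter_def, and_comm]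

/-- Double counting: the loads of the elements of `s` add up to `∑ i, |B i ∩ s| ≥ |ι| d`, which
forces equality in `hload`, and then in `hinter`. -/
lemma load_and_ncard_inter_eq_of_le {s : Set α} (hs : s.Finite) (B : ι → Set α) (d : ℕ)
    (hinter : ∀ i, d ≤ (B i ∩ s).ncard)
    (hload : ∀ e ∈ s, s.ncard * {i | e ∈ B i}.ncard ≤ Fintype.card ι * d) :
    (∀ e ∈ s, s.ncard * {i | e ∈ B i}.ncard = Fintype.card ι * d) ∧
      ∀ i, (B i ∩ s).ncard = d := by
  lift s to Finset α using hs
  simp only [Finset.mem_coe, ncard_coe_finset] at hload ⊢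
  have hcount := sum_ncard_setOf_mem_eq_sum_ncard_inter s B
  have hlower : ∑ _i : ι, d ≤ ∑ i, (B i ∩ s).ncard := Finset.sum_le_sum fun i _ => hinter i
  have hupper : ∑ e ∈ s, s.card * {i | e ∈ B i}.ncard ≤ ∑ _e ∈ s, Fintype.card ι * d :=
    Finset.sum_le_sum hload
  simp only [Finset.sum_const, smul_eq_mul, Finset.card_univ, ← Finset.mul_sum, hcount]
    at hlower hupper
  have htotal : s.card * ∑ i, (B i ∩ s).ncard = s.card * (Fintype.card ι * d) :=
    le_antisymm hupper (by gcongr)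
  refine ⟨(Finset.sum_eq_sum_iff_of_le hload).1 ?_, ?_⟩
  · rwa [Finset.sum_const, smul_eq_mul, ← Finset.mul_sum, hcount]
  · rcases s.eq_empty_or_nonempty with rfl | hs
    · simpa [eq_comm] using hinter
    · refine fun i => ((Finset.sum_eq_sum_iff_of_le fun i _ => hinter i).1 ?_ i
        (Finset.mem_univ i)).symm
      simpa [mul_comm] using (Nat.eq_of_mul_eq_mul_left hs.card_pos htotal).symm

end DoubleCounting

section Phi

variable {M : Matroid α} {A : Set α}

lemma AttainsPhi.nonempty (hA : AttainsPhi M A) : A.Nonempty := by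
  refine nonempty_iff_ne_empty.2 ?_
  rintro rfl
  simpa using hA.2.1

lemma AttainsPhi.one_div_PhiM_eq (hA : AttainsPhi M A) :
    1 / PhiM M = ((mrk M M.E - mrk M (M.E \ A) : ℕ) : ℝ) / A.ncard := by
  rw [← hA.2.2, one_div_div, Nat.cast_sub hA.2.1.le]

end Phi

section RelLoad

variable {k : ℕ} {Bs : Fin k → Set α}

lemma pos_of_sSup_relLoad_pos {S : Set α} (h : 0 < sSup ((fun e => relLoad Bs e) '' S)) :
    0 < k := by
  refine Nat.pos_of_ne_zero fun hk => h.not_ge (Real.sSup_nonpos ?_)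
  rintro _ ⟨e, -, rfl⟩
  simp [relLoad, hk]

lemma relLoad_le_div_iff (hk : 0 < k) {n : ℕ} (hn : 0 < n) (d : ℕ) (e : α) :
    relLoad Bs e ≤ d / n ↔ n * {i | e ∈ Bs i}.ncard ≤ k * d := by
  rw [relLoad, div_le_div_iff₀ (by positivity) (by positivity), mul_comm (n : ℕ), mul_comm k]
  norm_cast

lemma relLoad_eq_div_iff (hk : 0 < k) {n : ℕ} (hn : 0 < n) (d : ℕ) (e : α) :
    relLoad Bs e = d / n ↔ n * {i | e ∈ Bs i}.ncard = k * d := by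
  rw [relLoad, div_eq_div_iff (by positivity) (by positivity), mul_comm (n : ℕ), mul_comm k]
  norm_cast

end RelLoad

theorem stmt_11_general (M : Matroid α) (hfin : M.E.Finite)
    (k : ℕ) (Bs : Fin k → Set α) (hBs : ∀ i, M.IsBase (Bs i))
    (hopt : 1 / sSup ((fun e => relLoad Bs e) '' M.E) = PhiM M)
    (A₀ : Set α) (hA₀ : AttainsPhi M A₀) :
    (∀ e ∈ A₀, relLoad Bs e = 1 / PhiM M) ∧
    (∀ i, ((Bs i ∩ A₀).ncard : ℤ) = (mrk M M.E : ℤ) - (mrk M (M.E \ A₀) : ℤ)) := by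
  obtain ⟨hA₀E, hlt, -⟩ := id hA₀
  set d := mrk M M.E - mrk M (M.E \ A₀)
  have hn : 0 < A₀.ncard := (ncard_pos (hfin.subset hA₀E)).2 hA₀.nonempty
  have hmax : sSup ((fun e => relLoad Bs e) '' M.E) = d / A₀.ncard := by
    rw [← hA₀.one_div_PhiM_eq, ← hopt, one_div_one_div]
  have hk : 0 < k := by
    have hd : 0 < d := Nat.sub_pos_of_lt hlt
    refine pos_of_sSup_relLoad_pos (Bs := Bs) (S := M.E) ?_
    rw [hmax]
    positivity
  have hload : ∀ e ∈ A₀, A₀.ncard * {i | e ∈ Bs i}.ncard ≤ Fintype.card (Fin k) * d := by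
    intro e he
    rw [Fintype.card_fin, ← relLoad_le_div_iff hk hn, ← hmax]
    exact le_csSup (hfin.image _).bddAbove (mem_image_of_mem _ (hA₀E he))
  obtain ⟨hload_eq, hinter_eq⟩ := load_and_ncard_inter_eq_of_le (hfin.subset hA₀E) Bs d
    (fun i => Nat.sub_le_iff_le_add.2 ((hBs i).mrk_ground_le_ncard_inter_add hfin A₀)) hload
  refine ⟨fun e he => ?_, fun i => by rw [hinter_eq i, Nat.cast_sub hlt.le]⟩
  rw [hA₀.one_div_PhiM_eq, relLoad_eq_div_iff hk hn]
  simpa using hload_eq e he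

/-- If a base collection achieves `1 / max ℓ = Φ_M` and `A₀` attains `Φ_M`, then all
elements of `A₀` have relative load exactly `1/Φ_M` and every base in the collection meets
`A₀` in exactly `rk(E) − rk(E \ A₀)` elements. -/
theorem stmt_11 (M : Matroid α) (hfin : M.E.Finite) (hrk : 1 ≤ mrk M M.E)
    (k : ℕ) (hk : 0 < k) (Bs : Fin k → Set α) (hBs : ∀ i, M.IsBase (Bs i))
    (hopt : 1 / sSup ((fun e => relLoad Bs e) '' M.E) = PhiM M)
    (A₀ : Set α) (hA₀ : AttainsPhi M A₀) :
    (∀ e ∈ A₀, relLoad Bs e = 1 / PhiM M) ∧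
    (∀ i, ((Bs i ∩ A₀).ncard : ℤ) = (mrk M M.E : ℤ) - (mrk M (M.E \ A₀) : ℤ)) :=
  stmt_11_general M hfin k Bs hBs hopt A₀ hA₀
end

section
/- Let M be a matroid on a finite ground set E, let w : E → ℝ be a weight function, let B be a minimum-weight base of M with respect to w, and let A ⊆ E. Then there exists a minimum-weight base B_A of the restriction M|A (with respect to w restricted to A) such that B ∩ A ⊆ B_A. -/
open Set Matroid

variable {α : Type*}

/-
Choose, among the minimum-weight bases of `M ↾ A`, one `B_A` meeting `B` in as many elements as
possible. If some `e ∈ B ∩ A` were missing from `B_A`, then `e` is spanned by `B_A` but not by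
`B - e`, so some `f` in the fundamental circuit of `e` in `B_A` lies outside the closure of `B - e`.
Both `B - e + f` and `B_A - f + e` are then bases; minimality of `B` gives `w e ≤ w f`, so
`B_A - f + e` is again of minimum weight and meets `B` in one more element.
-/

namespace Matroid

variable {M : Matroid α} {B I : Set α} {e : α}

lemma IsBase.exists_symm_exchange_of_mem_closure (hB : M.IsBase B) (heB : e ∈ B)
    (hI : M.Indep I) (heI : e ∈ M.closure I) (he : e ∉ I) :
    ∃ f ∈ I \ B, M.IsBase (insert f (B \ {e})) ∧ M.Indep (insert e (I \ {f})) := by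
  have hC := hI.fundCircuit_isCircuit heI he
  obtain ⟨f, hfC, hf⟩ : ∃ f ∈ M.fundCircuit e I \ {e}, f ∉ M.closure (B \ {e}) := by
    by_contra! h
    exact hB.indep.notMem_closure_sdiff_of_mem heB <| M.closure_subset_closure_of_subset_closure h
      (hC.mem_closure_sdiff_singleton_of_mem (M.mem_fundCircuit e I))
  have hfe : f ≠ e := hfC.2
  have hfI : f ∈ I := (mem_insert_iff.1 (M.fundCircuit_subset_insert e I hfC.1)).resolve_left hfe
  have hfB : f ∉ B := fun h ↦
    hf (M.subset_closure _ (sdiff_subset.trans hB.subset_ground) ⟨h, hfe⟩)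
  refine ⟨f, ⟨hfI, hfB⟩,
    hB.exchange_base_of_notMem_closure heB hf (hI.subset_ground hfI), ?_⟩
  rw [insert_sdiff_singleton_comm hfe.symm]
  exact (hI.mem_fundCircuit_iff heI he).1 hfC.1

lemma finite_setOf_isBase (hfin : M.E.Finite) : Set.Finite {B | M.IsBase B} :=
  hfin.finite_subsets.subset fun _ hB ↦ hB.subset_ground

end Matroid

section MinWeightBase

variable {M : Matroid α} {w : α → ℝ} {A B X Y : Set α} {e f : α}

lemma wSum_insert_sdiff_add (w : α → ℝ) (hS : X.Finite) (he : e ∈ X) (hf : f ∉ X) :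
    wSum w (insert f (X \ {e})) + w e = wSum w X + w f := by
  have hsplit : wSum w X = w e + wSum w (X \ {e}) := by
    conv_lhs => rw [← insert_eq_of_mem he, ← insert_sdiff_singleton]
    exact finsum_mem_insert w (fun h ↦ h.2 rfl) hS.sdiff
  rw [hsplit, wSum, finsum_mem_insert w (fun h ↦ hf h.1) hS.sdiff, wSum]
  ring

lemma exists_isMinWeightBase (hfin : M.E.Finite) (w : α → ℝ) :
    ∃ B, IsMinWeightBase M w B := by
  obtain ⟨B, hB, hmin⟩ := Set.exists_min_image _ (wSum w) (finite_setOf_isBase hfin)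
    M.exists_isBase
  exact ⟨B, hB, hmin⟩

lemma IsMinWeightBase.of_isBase_of_wSum_le (hX : IsMinWeightBase M w X) (hY : M.IsBase Y)
    (hYX : wSum w Y ≤ wSum w X) : IsMinWeightBase M w Y :=
  ⟨hY, fun _ hB' ↦ hYX.trans (hX.2 _ hB')⟩

lemma IsMinWeightBase.exists_exchange_restrict (hfin : M.E.Finite) (hB : IsMinWeightBase M w B)
    (hA : A ⊆ M.E) (hX : IsMinWeightBase (M ↾ A) w X) (heB : e ∈ B) (heA : e ∈ A)
    (heX : e ∉ X) :
    ∃ f ∈ X \ B, IsMinWeightBase (M ↾ A) w (insert e (X \ {f})) := by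
  have hXA : M.IsBasis X A := (isBase_restrict_iff hA).1 hX.1
  obtain ⟨f, ⟨hfX, hfB⟩, hBf, hXe⟩ := hB.1.exists_symm_exchange_of_mem_closure heB hXA.indep
    (hXA.subset_closure heA) heX
  have hXe' : (M ↾ A).IsBase (insert e (X \ {f})) := hX.1.exchange_isBase_of_indep heX
    (restrict_indep_iff.2 ⟨hXe, insert_subset heA (sdiff_subset.trans hXA.subset)⟩)
  have hBfin : B.Finite := hfin.subset hB.1.subset_ground
  have hXfin : X.Finite := hfin.subset (hXA.subset.trans hA)
  have hB_le := hB.2 _ hBf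
  have hswapB := wSum_insert_sdiff_add w hBfin heB hfB
  have hswapX := wSum_insert_sdiff_add w hXfin hfX heX
  exact ⟨f, ⟨hfX, hfB⟩, hX.of_isBase_of_wSum_le hXe' (by linarith)⟩

end MinWeightBase

/-- For any minimum-weight base `B` of `M` and any `A ⊆ E` there is a minimum-weight base
`B_A` of the restriction `M|A` containing `B ∩ A`. -/
theorem stmt_14 (M : Matroid α) (hfin : M.E.Finite) (w : α → ℝ)
    (B : Set α) (hB : IsMinWeightBase M w B) (A : Set α) (hA : A ⊆ M.E) :
    ∃ BA, IsMinWeightBase (M ↾ A) w BA ∧ B ∩ A ⊆ BA := by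
  have hAfin : A.Finite := hfin.subset hA
  obtain ⟨BA, hBA, hmax⟩ := Set.exists_max_image {X | IsMinWeightBase (M ↾ A) w X}
    (fun X ↦ (X ∩ B).ncard) ((finite_setOf_isBase (M := M ↾ A) hAfin).subset fun _ h ↦ h.1)
    (exists_isMinWeightBase hAfin w)
  refine ⟨BA, hBA, fun e ⟨heB, heA⟩ ↦ by_contra fun heBA ↦ ?_⟩
  obtain ⟨f, ⟨-, hfB⟩, hBA'⟩ := hB.exists_exchange_restrict hfin hA hBA heB heA heBA
  have hgrow : BA ∩ B ⊂ insert e (BA \ {f}) ∩ B := by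
    refine (ssubset_iff_of_subset fun x hx ↦ ?_).2
      ⟨e, ⟨mem_insert _ _, heB⟩, fun h ↦ heBA h.1⟩
    exact ⟨mem_insert_of_mem _ ⟨hx.1, ne_of_mem_of_not_mem hx.2 hfB⟩, hx.2⟩
  exact (hmax _ hBA').not_gt
    (ncard_lt_ncard hgrow ((hAfin.subset hBA'.1.subset_ground).inter_of_left B))
end

section
/- Let M be a matroid on a finite ground set E, let A ⊆ E, and let w : E → ℝ be a weight function such that w(a) < w(b) for every a ∈ A and every b ∈ E\A. Then for every minimum-weight base B of M with respect to w, the set B ∩ A is a base of the restriction M|A. -/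
/-! Let `e ∈ A` lie outside the minimum-weight base `B`. Every `y` in the fundamental circuit
of `e` with respect to `B` satisfies `w y ≤ w e`, since otherwise exchanging `y` for `e` gives
a lighter base. Elements outside `A` are heavier than `e`, so this circuit lies in
`insert e (B ∩ A)` and `e` is spanned by `B ∩ A`. -/

open Set Matroid

variable {α : Type*}

lemma wSum_insert_sdiff_singleton (w : α → ℝ) {B : Set α} (hB : B.Finite) {e y : α}
    (he : e ∉ B) (hy : y ∈ B) : wSum w (insert e B \ {y}) = wSum w B + w e - w y := by
  have h_insert : wSum w (insert e B) = w e + wSum w B := finsum_mem_insert w he hB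
  have h_split : w y + wSum w (insert e B \ {y}) = wSum w (insert e B) := by
    have := finsum_mem_add_sdiff (f := w) (singleton_subset_iff.2 (mem_insert_of_mem e hy))
      (hB.insert e)
    rwa [finsum_mem_singleton] at this
  linarith

lemma IsMinWeightBase.le_of_mem_fundCircuit {M : Matroid α} {w : α → ℝ} {B : Set α}
    (hB : IsMinWeightBase M w B) (hBfin : B.Finite) {e y : α} (he : e ∈ M.E) (heB : e ∉ B)
    (hy : y ∈ M.fundCircuit e B) : w y ≤ w e := by
  obtain rfl | hye := eq_or_ne y e
  · rfl
  have hyB : y ∈ B := (mem_insert_iff.1 (M.fundCircuit_subset_insert e B hy)).resolve_left hye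
  have h_indep : M.Indep (insert e B \ {y}) :=
    (hB.1.indep.mem_fundCircuit_iff (by rwa [hB.1.closure_eq]) heB).1 hy
  have h_le := hB.2 _ (hB.1.exchange_isBase_of_indep' hyB heB h_indep)
  rw [wSum_insert_sdiff_singleton w hBfin heB hyB] at h_le
  linarith

theorem stmt_16_general (M : Matroid α) (hfin : M.E.Finite) (A : Set α)
    (w : α → ℝ) (hw : ∀ a ∈ A, ∀ b ∈ M.E \ A, w a < w b)
    (B : Set α) (hB : IsMinWeightBase M w B) :
    (M ↾ A).IsBase (B ∩ A) := by
  have hBE : B ⊆ M.E := hB.1.subset_ground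
  rw [isBase_restrict_iff', isBasis'_iff_isBasis_inter_ground]
  refine hB.1.indep.inter_right A |>.isBasis_of_subset_of_subset_closure
    (subset_inter inter_subset_right (inter_subset_left.trans hBE)) ?_
  rintro e ⟨heA, heE⟩
  by_cases heB : e ∈ B
  · exact M.subset_closure _ (inter_subset_left.trans hBE) ⟨heB, heA⟩
  have h_circuit := hB.1.fundCircuit_isCircuit heE heB
  suffices h_sub : M.fundCircuit e B \ {e} ⊆ B ∩ A from M.closure_subset_closure h_sub
    (h_circuit.mem_closure_sdiff_singleton_of_mem (M.mem_fundCircuit e B))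
  rw [M.fundCircuit_sdiff_eq_inter heB]
  rintro y ⟨hyC, hyB⟩
  refine ⟨hyB, by_contra fun hyA ↦ ?_⟩
  exact (hw e heA y ⟨hBE hyB, hyA⟩).not_ge
    (hB.le_of_mem_fundCircuit (hfin.subset hBE) heE heB hyC)

/-- If all elements of `A` are lighter than all elements of `E \ A`, then every
minimum-weight base of `M` meets `A` in a base of the restriction `M|A`. -/
theorem stmt_16 (M : Matroid α) (hfin : M.E.Finite) (A : Set α) (hA : A ⊆ M.E)
    (w : α → ℝ) (hw : ∀ a ∈ A, ∀ b ∈ M.E \ A, w a < w b)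
    (B : Set α) (hB : IsMinWeightBase M w B) :
    (M ↾ A).IsBase (B ∩ A) :=
  stmt_16_general M hfin A w hw B hB
end
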